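/- arXiv:1204.4221 — 6 statements merged into one kernel-verified Lean document; each statement's English description precedes it below -/
import Mathlib

section
/- For every matrix ρ ∈ Matrix (Fin 2) (Fin 2) ℂ, (1/2)ρ + (1/2)HρH = |H⟩⟨H| ρ |H⟩⟨H| + |−H⟩⟨−H| ρ |−H⟩⟨−H|. Consequently, if ρ is Hermitian with trace 1 then (1/2)ρ + (1/2)HρH = (1−p)|H⟩⟨H| + p|−H⟩⟨−H| where p = ⟨−H|ρ|−H⟩; i.e., twirling with the Hadamard gate decoheres any one-qubit state into a probabilistic mixture of |H⟩ and |−H⟩. -/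
open Matrix

noncomputable def Hgate : Matrix (Fin 2) (Fin 2) ℂ :=
  ((Real.sqrt 2 : ℂ))⁻¹ • !![1, 1; 1, -1]

/-- `|H⟩ = cos(π/8)|0⟩ + sin(π/8)|1⟩`. -/
noncomputable def ketH : Fin 2 → ℂ :=
  ![(Real.cos (Real.pi / 8) : ℂ), (Real.sin (Real.pi / 8) : ℂ)]

/-- `|−H⟩ = −sin(π/8)|0⟩ + cos(π/8)|1⟩`. -/
noncomputable def ketmH : Fin 2 → ℂ :=
  ![-(Real.sin (Real.pi / 8) : ℂ), (Real.cos (Real.pi / 8) : ℂ)]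

/-- The rank-one projector `|v⟩⟨v|`. -/
noncomputable def proj (v : Fin 2 → ℂ) : Matrix (Fin 2) (Fin 2) ℂ :=
  Matrix.vecMulVec v (star v)

/-- The matrix element `⟨v|ρ|v⟩`. -/
noncomputable def matElem (v : Fin 2 → ℂ) (ρ : Matrix (Fin 2) (Fin 2) ℂ) : ℂ :=
  dotProduct (star v) (ρ.mulVec v)

lemma trig1 : (Real.cos (Real.pi/8) : ℂ)^2 + (Real.sin (Real.pi/8) : ℂ)^2 = 1 := by
  exact_mod_cast Real.cos_sq_add_sin_sq (Real.pi/8)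

lemma hsc : Real.sin (Real.pi/8) * Real.cos (Real.pi/8) = Real.sqrt 2 / 4 := by
  have h : 2 * Real.sin (Real.pi/8) * Real.cos (Real.pi/8) = Real.sqrt 2 / 2 := by
    rw [← Real.sin_two_mul]
    norm_num [show 2*(Real.pi/8) = Real.pi/4 by ring, Real.sin_pi_div_four]
  linarith

lemma hdiff : Real.cos (Real.pi/8)^2 - Real.sin (Real.pi/8)^2 = Real.sqrt 2 / 2 := by
  rw [← Real.cos_two_mul']
  norm_num [show 2*(Real.pi/8) = Real.pi/4 by ring, Real.cos_pi_div_four]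

lemma trigA : (Real.cos (Real.pi/8) : ℂ)^2 * (Real.sin (Real.pi/8) : ℂ)^2 = 1/8 := by
  have h2 : Real.cos (Real.pi/8)^2 * Real.sin (Real.pi/8)^2 = 1/8 := by
    have hs2 : Real.sqrt 2 ^ 2 = 2 := Real.sq_sqrt (by norm_num)
    calc Real.cos (Real.pi/8)^2 * Real.sin (Real.pi/8)^2
        = (Real.sin (Real.pi/8) * Real.cos (Real.pi/8))^2 := by ring
      _ = (Real.sqrt 2 / 4)^2 := by rw [hsc]
      _ = 1/8 := by rw [div_pow, hs2]; norm_num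
  rw [show ((1:ℂ)/8) = ((1/8 : ℝ) : ℂ) by norm_num, ← h2]; push_cast; ring

lemma trigB : (Real.cos (Real.pi/8) : ℂ) * (Real.sin (Real.pi/8) : ℂ) *
    ((Real.cos (Real.pi/8) : ℂ)^2 - (Real.sin (Real.pi/8) : ℂ)^2) = 1/4 := by
  have h2 : Real.cos (Real.pi/8) * Real.sin (Real.pi/8) *
      (Real.cos (Real.pi/8)^2 - Real.sin (Real.pi/8)^2) = 1/4 := by
    have hs2 : Real.sqrt 2 ^ 2 = 2 := Real.sq_sqrt (by norm_num)
    rw [hdiff, mul_comm (Real.cos _), hsc]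
    nlinarith [hs2]
  rw [show ((1:ℂ)/4) = ((1/4 : ℝ) : ℂ) by norm_num, ← h2]; push_cast; ring

lemma hH (ρ : Matrix (Fin 2) (Fin 2) ℂ) :
    Hgate * ρ * Hgate = (1/2 : ℂ) • (!![1,1;1,-1] * ρ * !![1,1;1,-1]) := by
  have hr : ((Real.sqrt 2 : ℂ))⁻¹ * ((Real.sqrt 2 : ℂ))⁻¹ = 1/2 := by
    rw [← mul_inv]
    norm_cast
    rw [Real.mul_self_sqrt (by norm_num : (0:ℝ) ≤ 2)]
    norm_num
  rw [Hgate, Matrix.smul_mul, Matrix.smul_mul, Matrix.mul_smul, smul_smul, hr]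

lemma part1 (ρ : Matrix (Fin 2) (Fin 2) ℂ) :
    (1 / 2 : ℂ) • ρ + (1 / 2 : ℂ) • (Hgate * ρ * Hgate)
      = proj ketH * ρ * proj ketH + proj ketmH * ρ * proj ketmH := by
  have h1 := trig1
  have hA := trigA
  have hB := trigB
  rw [hH]
  set c : ℂ := (Real.cos (Real.pi/8) : ℂ) with hc
  set s : ℂ := (Real.sin (Real.pi/8) : ℂ) with hs
  have hcstar : (starRingEnd ℂ) c = c := by rw [hc]; exact Complex.conj_ofReal _
  have hsstar : (starRingEnd ℂ) s = s := by rw [hs]; exact Complex.conj_ofReal _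
  ext i j
  fin_cases i <;> fin_cases j <;>
    simp only [proj, ketH, ketmH, Matrix.mul_apply, Matrix.vecMulVec_apply,
      Matrix.add_apply, Matrix.smul_apply, smul_eq_mul, Fin.sum_univ_two,
      Pi.star_apply, Complex.star_def, map_neg, Fin.zero_eta, Fin.mk_one,
      Matrix.cons_val_zero, Matrix.cons_val_one, Matrix.head_cons,
      Matrix.cons_val', Matrix.empty_val', Matrix.cons_val_fin_one,
      Matrix.vecHead, Matrix.vecTail, Matrix.of_apply, Fin.isValue,
      hcstar, hsstar, ← hc, ← hs]
  · linear_combination (ρ 0 0)*(-(c^2+s^2+1))*h1 + (2*(ρ 0 0) - 2*(ρ 1 1))*hA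
      - (ρ 0 1 + ρ 1 0)*hB
  · linear_combination - (ρ 0 0 - ρ 1 1)*hB - 2*(ρ 0 1 + ρ 1 0)*hA
  · linear_combination - (ρ 0 0 - ρ 1 1)*hB - 2*(ρ 0 1 + ρ 1 0)*hA
  · linear_combination - 2*(ρ 0 0)*hA + (ρ 0 1 + ρ 1 0)*hB
      + (ρ 1 1)*((-(c^2+s^2+1))*h1 + 2*hA)

lemma projmul (v : Fin 2 → ℂ) (ρ : Matrix (Fin 2) (Fin 2) ℂ) :
    proj v * ρ * proj v = matElem v ρ • proj v := by
  ext i j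
  fin_cases i <;> fin_cases j <;>
    simp only [proj, matElem, Matrix.mul_apply, Matrix.vecMulVec_apply,
      Matrix.smul_apply, smul_eq_mul, Fin.sum_univ_two, dotProduct,
      Matrix.mulVec, Pi.star_apply, Fin.zero_eta, Fin.mk_one, Fin.isValue] <;>
    ring

lemma traceSum (ρ : Matrix (Fin 2) (Fin 2) ℂ) :
    matElem ketH ρ + matElem ketmH ρ = ρ.trace := by
  simp only [matElem, ketH, ketmH, dotProduct, Matrix.mulVec, Matrix.trace,
    Matrix.diag, Fin.sum_univ_two, Pi.star_apply, Complex.star_def, map_neg,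
    Complex.conj_ofReal, Matrix.cons_val_zero, Matrix.cons_val_one,
    Matrix.head_cons, Fin.isValue]
  linear_combination (ρ 0 0 + ρ 1 1) * trig1

theorem hadamard_twirl_decoheres :
    (∀ ρ : Matrix (Fin 2) (Fin 2) ℂ,
      (1 / 2 : ℂ) • ρ + (1 / 2 : ℂ) • (Hgate * ρ * Hgate)
        = proj ketH * ρ * proj ketH + proj ketmH * ρ * proj ketmH) ∧
    (∀ ρ : Matrix (Fin 2) (Fin 2) ℂ, ρ.IsHermitian → ρ.trace = 1 →
      (1 / 2 : ℂ) • ρ + (1 / 2 : ℂ) • (Hgate * ρ * Hgate)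
        = (1 - matElem ketmH ρ) • proj ketH + matElem ketmH ρ • proj ketmH) := by
  refine ⟨part1, fun ρ _ htr => ?_⟩
  have h := traceSum ρ
  rw [htr] at h
  rw [part1, projmul, projmul, show matElem ketH ρ = 1 - matElem ketmH ρ by
    linear_combination h]
end

section
/- Transversal Hadamard on the four-qubit code effects the logical operation H̄₁H̄₂·SWAP: writing H⁴ = H⊗H⊗H⊗H (which is its own inverse), one has H⁴ S_X H⁴ = S_Z and H⁴ S_Z H⁴ = S_X (so H⁴ commutes with the code projector Π = ¼(1+S_X)(1+S_Z)), and on logical operators H⁴ X̄₁ H⁴ = Z̄₂, H⁴ Z̄₁ H⁴ = X̄₂, H⁴ X̄₂ H⁴ = Z̄₁, and H⁴ Z̄₂ H⁴ = X̄₁. -/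
open Matrix Kronecker

def Xmat : Matrix (Fin 2) (Fin 2) ℂ := !![0, 1; 1, 0]

def Zmat : Matrix (Fin 2) (Fin 2) ℂ := !![1, 0; 0, -1]

/-- Four-fold Kronecker product of one-qubit operators. -/
def kron4 (A B C D : Matrix (Fin 2) (Fin 2) ℂ) :
    Matrix (((Fin 2 × Fin 2) × Fin 2) × Fin 2) (((Fin 2 × Fin 2) × Fin 2) × Fin 2) ℂ :=
  A ⊗ₖ B ⊗ₖ C ⊗ₖ D

/-- Stabilizer generator `X⊗X⊗X⊗X` of the four-qubit code. -/
def SX := kron4 Xmat Xmat Xmat Xmat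

/-- Stabilizer generator `Z⊗Z⊗Z⊗Z` of the four-qubit code. -/
def SZ := kron4 Zmat Zmat Zmat Zmat

def Xbar1 := kron4 Xmat Xmat 1 1
def Zbar1 := kron4 Zmat 1 1 Zmat
def Xbar2 := kron4 Xmat 1 1 Xmat
def Zbar2 := kron4 Zmat Zmat 1 1

/-- Transversal Hadamard `H⊗H⊗H⊗H`. -/
noncomputable def H4 := kron4 Hgate Hgate Hgate Hgate

/-- The code projector `Π = ¼(1+S_X)(1+S_Z)`. -/
noncomputable def codeProj := (1 / 4 : ℂ) • ((1 + SX) * (1 + SZ))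

lemma csq : ((Real.sqrt 2 : ℂ))⁻¹ * ((Real.sqrt 2 : ℂ))⁻¹ = (2:ℂ)⁻¹ := by
  have h : (Real.sqrt 2:ℂ)*(Real.sqrt 2:ℂ) = 2 := by
    norm_cast
    rw [Real.mul_self_sqrt (by norm_num)]
  rw [← mul_inv, h]

lemma hHH : Hgate * Hgate = 1 := by
  unfold Hgate
  rw [smul_mul_assoc, mul_smul_comm, smul_smul, csq]
  ext i j
  fin_cases i <;> fin_cases j <;>
    simp [Matrix.mul_apply, Fin.sum_univ_two, Matrix.one_apply] <;> norm_num

lemma conj_gen (N R : Matrix (Fin 2) (Fin 2) ℂ)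
    (h : !![1, 1; 1, -1] * N * !![1, 1; 1, -1] = (2:ℂ) • R) :
    Hgate * N * Hgate = R := by
  unfold Hgate
  rw [smul_mul_assoc, smul_mul_assoc, mul_smul_comm, smul_smul, csq, h, smul_smul]
  norm_num

lemma hHXH : Hgate * Xmat * Hgate = Zmat := by
  apply conj_gen
  ext i j
  fin_cases i <;> fin_cases j <;>
    simp [Xmat, Zmat, Matrix.mul_apply, Fin.sum_univ_two] <;> norm_num

lemma hHZH : Hgate * Zmat * Hgate = Xmat := by
  apply conj_gen
  ext i j
  fin_cases i <;> fin_cases j <;>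
    simp [Xmat, Zmat, Matrix.mul_apply, Fin.sum_univ_two] <;> norm_num

lemma hH1H : Hgate * 1 * Hgate = 1 := by
  rw [mul_one, hHH]

lemma kron4_mul (A B C D A' B' C' D' : Matrix (Fin 2) (Fin 2) ℂ) :
    kron4 A B C D * kron4 A' B' C' D' = kron4 (A*A') (B*B') (C*C') (D*D') := by
  simp [kron4, ← Matrix.mul_kronecker_mul]

lemma conj4 (A B C D : Matrix (Fin 2) (Fin 2) ℂ) :
    H4 * kron4 A B C D * H4 =
      kron4 (Hgate*A*Hgate) (Hgate*B*Hgate) (Hgate*C*Hgate) (Hgate*D*Hgate) := by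
  rw [H4, kron4_mul, kron4_mul]

set_option maxHeartbeats 1000000 in
theorem transversal_hadamard_is_logical_HH_swap :
    H4 * H4 = 1 ∧
    H4 * SX * H4 = SZ ∧
    H4 * SZ * H4 = SX ∧
    Commute H4 codeProj ∧
    H4 * Xbar1 * H4 = Zbar2 ∧
    H4 * Zbar1 * H4 = Xbar2 ∧
    H4 * Xbar2 * H4 = Zbar1 ∧
    H4 * Zbar2 * H4 = Xbar1 := by
  have h44 : H4 * H4 = 1 := by
    rw [H4, kron4_mul, hHH]
    simp [kron4, Matrix.one_kronecker_one]
  have hx : H4 * SX * H4 = SZ := by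
    rw [SX, SZ, conj4, hHXH]
  have hz : H4 * SZ * H4 = SX := by
    rw [SX, SZ, conj4, hHZH]
  refine ⟨h44, hx, hz, ?_, ?_, ?_, ?_, ?_⟩
  · have hx' : H4 * SX = SZ * H4 := by
      calc H4 * SX = H4 * SX * H4 * H4 := by rw [mul_assoc, h44, mul_one]
      _ = SZ * H4 := by rw [hx]
    have hz' : H4 * SZ = SX * H4 := by
      calc H4 * SZ = H4 * SZ * H4 * H4 := by rw [mul_assoc, h44, mul_one]
      _ = SX * H4 := by rw [hz]
    have hXZ : Xmat * Zmat = -(Zmat * Xmat) := by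
      ext i j
      fin_cases i <;> fin_cases j <;>
        simp [Xmat, Zmat, Matrix.mul_apply, Fin.sum_univ_two]
    have hcom : SX * SZ = SZ * SX := by
      rw [SX, SZ, kron4_mul, kron4_mul, hXZ]
      have hn : -(Zmat*Xmat) = (-1:ℂ) • (Zmat*Xmat) := by simp
      rw [hn]
      simp only [kron4, Matrix.smul_kronecker, Matrix.kronecker_smul, smul_smul]
      norm_num
    have h3 : H4 * SX * SZ = SX * SZ * H4 := by
      rw [hx', mul_assoc, hz', ← mul_assoc, ← hcom]
    unfold codeProj
    rw [Commute, SemiconjBy, Matrix.mul_smul, Matrix.smul_mul]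
    congr 1
    simp only [mul_add, add_mul, mul_one, one_mul, ← mul_assoc, hx', hz', h3]
    rw [mul_assoc SZ H4 SZ, hz', ← mul_assoc, ← hcom]
    abel
  · rw [Xbar1, Zbar2, conj4, hHXH, hH1H]
  · rw [Zbar1, Xbar2, conj4, hHZH, hH1H]
  · rw [Xbar2, Zbar1, conj4, hHXH, hH1H]
  · rw [Zbar2, Xbar1, conj4, hHZH, hH1H]
end

section
/- A controlled-H and a controlled-Y gate sharing the same target can be exchanged at the cost of a controlled-Z between their controls: on (ℂ²)^{⊗3}, (CH)_{1,3} · (CY)_{2,3} = (CZ)_{1,2} · (CY)_{2,3} · (CH)_{1,3}, where (C-U)_{i,j} denotes the controlled-U gate with control qubit i and target qubit j, tensored with the identity on the remaining qubit. -/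
open Matrix Kronecker

def Ymat : Matrix (Fin 2) (Fin 2) ℂ := !![0, -Complex.I; Complex.I, 0]

def P0 : Matrix (Fin 2) (Fin 2) ℂ := !![1, 0; 0, 0]

def P1 : Matrix (Fin 2) (Fin 2) ℂ := !![0, 0; 0, 1]

def ctrl13 (U : Matrix (Fin 2) (Fin 2) ℂ) :
    Matrix (Fin 2 × Fin 2 × Fin 2) (Fin 2 × Fin 2 × Fin 2) ℂ :=
  P0 ⊗ₖ ((1 : Matrix (Fin 2) (Fin 2) ℂ) ⊗ₖ (1 : Matrix (Fin 2) (Fin 2) ℂ))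
    + P1 ⊗ₖ ((1 : Matrix (Fin 2) (Fin 2) ℂ) ⊗ₖ U)

def ctrl23 (U : Matrix (Fin 2) (Fin 2) ℂ) :
    Matrix (Fin 2 × Fin 2 × Fin 2) (Fin 2 × Fin 2 × Fin 2) ℂ :=
  (1 : Matrix (Fin 2) (Fin 2) ℂ) ⊗ₖ (P0 ⊗ₖ (1 : Matrix (Fin 2) (Fin 2) ℂ) + P1 ⊗ₖ U)

def ctrl12 (U : Matrix (Fin 2) (Fin 2) ℂ) :
    Matrix (Fin 2 × Fin 2 × Fin 2) (Fin 2 × Fin 2 × Fin 2) ℂ :=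
  P0 ⊗ₖ ((1 : Matrix (Fin 2) (Fin 2) ℂ) ⊗ₖ (1 : Matrix (Fin 2) (Fin 2) ℂ))
    + P1 ⊗ₖ (U ⊗ₖ (1 : Matrix (Fin 2) (Fin 2) ℂ))


lemma P00 : P0 * P0 = P0 := by
  ext i j; fin_cases i <;> fin_cases j <;> simp [P0, Matrix.mul_apply, Fin.sum_univ_two]
lemma P11 : P1 * P1 = P1 := by
  ext i j; fin_cases i <;> fin_cases j <;> simp [P1, Matrix.mul_apply, Fin.sum_univ_two]
lemma P01 : P0 * P1 = 0 := by
  ext i j; fin_cases i <;> fin_cases j <;> simp [P0, P1, Matrix.mul_apply, Fin.sum_univ_two]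
lemma P10 : P1 * P0 = 0 := by
  ext i j; fin_cases i <;> fin_cases j <;> simp [P0, P1, Matrix.mul_apply, Fin.sum_univ_two]
lemma ZP0 : Zmat * P0 = P0 := by
  ext i j; fin_cases i <;> fin_cases j <;> simp [Zmat, P0, Matrix.mul_apply, Fin.sum_univ_two]
lemma ZP1 : Zmat * P1 = -P1 := by
  ext i j; fin_cases i <;> fin_cases j <;> simp [Zmat, P1, Matrix.mul_apply, Fin.sum_univ_two]

lemma HY : Hgate * Ymat = -(Ymat * Hgate) := by
  ext i j
  fin_cases i <;> fin_cases j <;>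
    simp [Hgate, Ymat, Matrix.mul_apply, Fin.sum_univ_two] <;> ring

theorem CH_CY_exchange :
    ctrl13 Hgate * ctrl23 Ymat = ctrl12 Zmat * ctrl23 Ymat * ctrl13 Hgate := by
  simp only [ctrl13, ctrl23, ctrl12]
  simp only [Matrix.add_mul, Matrix.mul_add, ← Matrix.mul_kronecker_mul,
    Matrix.one_mul, Matrix.mul_one, P00, P11, P01, P10, Matrix.zero_kronecker,
    Matrix.kronecker_zero, add_zero, zero_add, Matrix.zero_mul, Matrix.mul_zero,
    ZP0, ZP1, HY]
  congr 1
  ext ⟨i, j⟩ ⟨a, b⟩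
  simp [Matrix.kroneckerMap_apply]
end

section
/- Errors on the two outputs of the 10-to-2 distillation routine are positively correlated: for every p ∈ [0,1], e₂(p) ≤ 2·e(p) − e(p)², or equivalently (clearing denominators, using a(p) > 0) u₂(p)·a(p) ≤ 2·u(p)·a(p) − u(p)². -/
/-- Acceptance probability of the 10-to-2 distillation routine. -/
def a (p : ℝ) : ℝ :=
  1 - 10*p + 58*p^2 - 192*p^3 + 400*p^4 - 544*p^5 + 480*p^6 - 256*p^7 + 64*p^8

/-- Probability of acceptance together with an error on a fixed output. -/
def u (p : ℝ) : ℝ :=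
  9*p^2 - 56*p^3 + 160*p^4 - 256*p^5 + 240*p^6 - 128*p^7 + 32*p^8

/-- Probability of acceptance together with at least one error on the two outputs. -/
def u2 (p : ℝ) : ℝ :=
  13*p^2 - 80*p^3 + 228*p^4 - 368*p^5 + 352*p^6 - 192*p^7 + 48*p^8

/-- Conditional error probability of one output. -/
noncomputable def e (p : ℝ) : ℝ := u p / a p

/-- Conditional probability of at least one error on the two outputs. -/
noncomputable def e2 (p : ℝ) : ℝ := u2 p / a p


lemma a_pos (p : ℝ) : 0 < a p := by
  have h : a p = 1/4 + 32*(p - 1/2)^6 + 64*(p - 1/2)^8 := by unfold a; ring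
  rw [h]; positivity

lemma key (p : ℝ) (hp0 : 0 ≤ p) (hp1 : p ≤ 1) :
    u2 p * a p ≤ 2 * u p * a p - (u p) ^ 2 := by
  have h : 2 * u p * a p - (u p) ^ 2 - u2 p * a p
      = p^2 * (1-p)^2 * (2*p-1)^4 *
        (1/2 + 6*(p - 1/2)^2 + 40*(p - 1/2)^4 + 32*(p - 1/2)^6) := by
    unfold a u u2; ring
  have hrhs : 0 ≤ p^2 * (1-p)^2 * (2*p-1)^4 *
      (1/2 + 6*(p - 1/2)^2 + 40*(p - 1/2)^4 + 32*(p - 1/2)^6) := by positivity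
  linarith

theorem output_errors_positively_correlated :
    ∀ p ∈ Set.Icc (0 : ℝ) 1,
      e2 p ≤ 2 * e p - (e p) ^ 2 ∧
      u2 p * a p ≤ 2 * u p * a p - (u p) ^ 2 := by
  intro p hp
  obtain ⟨hp0, hp1⟩ := hp
  have ha := a_pos p
  have hkey := key p hp0 hp1
  refine ⟨?_, hkey⟩
  have h : e2 p - (2 * e p - (e p)^2)
      = (u2 p * a p - (2 * u p * a p - (u p)^2)) / (a p)^2 := by
    unfold e e2; field_simp
  have : e2 p - (2 * e p - (e p)^2) ≤ 0 := by
    rw [h]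
    apply div_nonpos_of_nonpos_of_nonneg
    · linarith
    · positivity
  linarith
end

section
/- The probability that both outputs of the 10-to-2 distillation routine suffer an error is of order p²: by inclusion–exclusion this probability (jointly with acceptance) equals 2·u(p) − u₂(p), and the limit of (2·u(p) − u₂(p))/p² as p tends to 0 from the right equals 5; moreover 2·u(p) − u₂(p) ≥ 0 for all p ∈ [0,1]. -/
open Filter Topology
theorem both_outputs_error_second_order :
    Filter.Tendsto (fun p : ℝ => (2 * u p - u2 p) / p ^ 2)
      (nhdsWithin 0 (Set.Ioi 0)) (nhds 5) ∧
    ∀ p ∈ Set.Icc (0 : ℝ) 1, 0 ≤ 2 * u p - u2 p := by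
  constructor
  · have heq : ∀ p ∈ Set.Ioi (0:ℝ), (2 * u p - u2 p) / p ^ 2 =
        5 - 32*p + 92*p^2 - 144*p^3 + 128*p^4 - 64*p^5 + 16*p^6 := by
      intro p hp
      have hp0 : p ≠ 0 := ne_of_gt hp
      field_simp [u, u2]
      simp only [u, u2]
      ring
    have hcont : Filter.Tendsto (fun p : ℝ =>
        5 - 32*p + 92*p^2 - 144*p^3 + 128*p^4 - 64*p^5 + 16*p^6)
        (nhdsWithin 0 (Set.Ioi 0)) (nhds 5) := by
      have : ContinuousAt (fun p : ℝ =>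
          5 - 32*p + 92*p^2 - 144*p^3 + 128*p^4 - 64*p^5 + 16*p^6) 0 := by
        fun_prop
      have h := this.continuousWithinAt (s := Set.Ioi 0)
      simpa using h.tendsto
    refine Filter.Tendsto.congr' ?_ hcont
    filter_upwards [self_mem_nhdsWithin] with p hp
    exact (heq p hp).symm
  · intro p hp
    obtain ⟨h0, h1⟩ := hp
    simp only [u, u2]
    nlinarith [sq_nonneg p, sq_nonneg (1-p), sq_nonneg (p*(1-p)), sq_nonneg (p^2*(1-p)), sq_nonneg (p*(1-p)^2), sq_nonneg (p^2*(1-p)^2), mul_nonneg h0 (sub_nonneg.2 h1), sq_nonneg (p*(1-2*p)), sq_nonneg (p^2*(1-2*p)), sq_nonneg (p*(1-p)*(1-2*p))]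
end

section
/- In the limit of small input error probability, l rounds of the 10-to-2 distillation routine reduce the error from p to (1/9)(9p)^{2^l}: for every l ≥ 1, the limit of e^{∘l}(p)/p^{2^l} as p tends to 0 from the right equals 9^{2^l − 1}, where e^{∘l} denotes the l-fold composition of e with itself. -/
open Filter Topology
open Filter Topology
noncomputable def f0 (p : ℝ) : ℝ :=
  9 - 56*p + 160*p^2 - 256*p^3 + 240*p^4 - 128*p^5 + 32*p^6

lemma u_eq (p : ℝ) : u p = p^2 * f0 p := by unfold u f0; ring

lemma e_div_sq : Filter.Tendsto (fun p : ℝ => e p / p^2)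
    (nhdsWithin 0 (Set.Ioi 0)) (nhds 9) := by
  have hc : ContinuousAt (fun p : ℝ => f0 p / a p) 0 := by
    apply ContinuousAt.div
    · unfold f0; fun_prop
    · unfold a; fun_prop
    · norm_num [a]
  have h : Filter.Tendsto (fun p : ℝ => f0 p / a p)
      (nhdsWithin 0 (Set.Ioi 0)) (nhds 9) := by
    have := hc.continuousWithinAt (s := Set.Ioi 0)
    have h0 : f0 0 / a 0 = 9 := by norm_num [f0, a]
    simpa [ContinuousWithinAt, h0] using this
  refine h.congr' ?_
  filter_upwards [self_mem_nhdsWithin] with p hp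
  have hp0 : (p : ℝ) ≠ 0 := ne_of_gt hp
  rw [e, u_eq, div_div, mul_comm (a p)]
  exact (mul_div_mul_left _ _ (pow_ne_zero 2 hp0)).symm

lemma e_self : Filter.Tendsto e (nhdsWithin 0 (Set.Ioi 0)) (nhdsWithin 0 (Set.Ioi 0)) := by
  have hsq : Filter.Tendsto (fun p : ℝ => p^2) (nhdsWithin 0 (Set.Ioi 0)) (nhds 0) := by
    have := ((continuous_pow 2).tendsto (0:ℝ)).mono_left (nhdsWithin_le_nhds (s := Set.Ioi 0))
    simpa using this
  have hev : ∀ᶠ p in nhdsWithin (0:ℝ) (Set.Ioi 0), e p / p^2 * p^2 = e p := by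
    filter_upwards [self_mem_nhdsWithin] with p hp
    exact div_mul_cancel₀ _ (pow_ne_zero 2 (ne_of_gt hp))
  rw [tendsto_nhdsWithin_iff]
  constructor
  · have := e_div_sq.mul hsq
    rw [mul_zero] at this
    exact this.congr' (by filter_upwards [hev] with p h using h)
  · filter_upwards [e_div_sq.eventually (eventually_gt_nhds (show (0:ℝ) < 9 by norm_num)),
      self_mem_nhdsWithin, hev] with p h1 hp h2
    have : 0 < e p / p^2 * p^2 := mul_pos h1 (pow_pos hp 2)
    rwa [h2] at this

lemma iter_tendsto (l : ℕ) :
    Filter.Tendsto e^[l] (nhdsWithin 0 (Set.Ioi 0)) (nhdsWithin 0 (Set.Ioi 0)) := by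
  induction l with
  | zero => simpa using Filter.tendsto_id
  | succ l ih =>
      rw [Function.iterate_succ']
      exact e_self.comp ih

lemma key_s17 (l : ℕ) :
    Filter.Tendsto (fun p : ℝ => e^[l] p / p ^ (2 ^ l))
      (nhdsWithin 0 (Set.Ioi 0)) (nhds ((9 : ℝ) ^ (2 ^ l - 1))) := by
  induction l with
  | zero =>
      simp only [Function.iterate_zero, id_eq, pow_zero, pow_one]
      norm_num
      refine Filter.Tendsto.congr' ?_ tendsto_const_nhds
      filter_upwards [self_mem_nhdsWithin] with p hp
      rw [div_self (ne_of_gt hp)]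
  | succ l ih =>
      have A := iter_tendsto l
      have B : Filter.Tendsto (fun p : ℝ => e (e^[l] p) / (e^[l] p)^2)
          (nhdsWithin 0 (Set.Ioi 0)) (nhds 9) := e_div_sq.comp A
      have C := B.mul (ih.mul ih)
      have h2 : 2 ^ (l+1) - 1 = 1 + ((2^l - 1) + (2^l - 1)) := by
        have h1 : 1 ≤ 2^l := Nat.one_le_two_pow
        have h3 : 2^(l+1) = 2 * 2^l := by ring
        omega
      have hval : (9:ℝ) * ((9:ℝ)^(2^l - 1) * (9:ℝ)^(2^l - 1)) = (9:ℝ)^(2^(l+1) - 1) := by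
        rw [h2, pow_add, pow_add, pow_one]
      rw [← hval]
      refine C.congr' ?_
      filter_upwards [A self_mem_nhdsWithin, self_mem_nhdsWithin] with p hq hp
      have hq0 : e^[l] p ≠ 0 := ne_of_gt hq
      have hp0 : p ^ (2^l) ≠ 0 := pow_ne_zero _ (ne_of_gt hp)
      have hpow : p ^ (2^(l+1)) = (p ^ (2^l))^2 := by rw [← pow_mul]; ring_nf
      simp only [Function.iterate_succ_apply', hpow]
      field_simp

theorem iterated_distillation_error_scaling :
    ∀ l : ℕ, 1 ≤ l →
      Filter.Tendsto (fun p : ℝ => e^[l] p / p ^ (2 ^ l))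
        (nhdsWithin 0 (Set.Ioi 0)) (nhds ((9 : ℝ) ^ (2 ^ l - 1))) := by
  intro l _
  exact key_s17 l
end
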